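/- Let Y be a complex Banach space, let Z be a bounded operator on Y, let K ⊆ iℝ be compact with σ(Z) ⊆ K, and let Ψ : C(K) → L(Y) be a continuous unital algebra homomorphism with Ψ(ι) = Z, where ι(z) = z. Then for every g ∈ C(K), σ(Ψ(g)) = g(σ(Z)) := {g(w) : w ∈ σ(Z)}. -/

import Mathlib

/-!
Write `a = Ψ ι` and `S = σ(a)`. If `f ∈ C(K)` vanishes near `S`, then `μ ↦ Ψ (f / (ι - μ))`
(defined off the values of `ι` on the support of `f`) and `μ ↦ -Ψ f (μ - a)⁻¹` (defined off `S`)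
glue to an entire function vanishing at infinity, so `Ψ f = 0` by Liouville. Hence, if `g - λ`
has no zero on `S`, a cutoff `φ` equal to `1` near `S` and supported where `g ≠ λ` has `Ψ φ = 1`,
and `Ψ (φ / (g - λ))` inverts `Ψ (g - λ)`. Conversely, if `Ψ (g - g z₀)` is invertible, a bump `φ`
at `z₀` supported where `g - g z₀` is small has `‖Ψ φ‖ < 1`; then `Ψ (1 - φ)` is invertible, and
`1 - φ = ((1 - φ) / (ι - z₀)) (ι - z₀)` shows that so is `a - z₀`.
-/

open Complex MeasureTheory Filter Topology
open scoped ENNReal NNReal Classical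

noncomputable section

variable {X : Type*} [NormedAddCommGroup X] [NormedSpace ℂ X]

/-- `Ψ` is a bounded `C(K)`-calculus for the bounded operator `Z` : a continuous unital
algebra homomorphism `C(K) → L(X)` mapping the identity function `ι(z) = z` to `Z`. -/
def IsCKCalculus (K : Set ℂ) (Z : X →L[ℂ] X) (Ψ : C(↥K, ℂ) → X →L[ℂ] X) : Prop :=
  (∀ g h : C(↥K, ℂ), Ψ (g + h) = Ψ g + Ψ h) ∧
  (∀ (c : ℂ) (g : C(↥K, ℂ)), Ψ (c • g) = c • Ψ g) ∧
  (∀ g h : C(↥K, ℂ), Ψ (g * h) = Ψ g * Ψ h) ∧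
  Ψ 1 = 1 ∧
  (∃ C : ℝ, ∀ g : C(↥K, ℂ), ‖Ψ g‖ ≤ C * ⨆ z : K, ‖g z‖) ∧
  Ψ ⟨fun z => (z : ℂ), continuous_subtype_val⟩ = Z

theorem norm_inv_sub_sub_inv_sub_mul_inv_sq_le {𝕜 : Type*} [NormedField 𝕜] {a h : 𝕜} {d : ℝ}
    (hd : 0 < d) (ha : d ≤ ‖a‖) (hh : ‖h‖ ≤ d / 2) :
    ‖(a - h)⁻¹ - a⁻¹ - h * (a ^ 2)⁻¹‖ ≤ 2 / d ^ 3 * ‖h‖ ^ 2 := by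
  have hah : d / 2 ≤ ‖a - h‖ := by linarith [norm_sub_norm_le a h]
  have ha₀ : a ≠ 0 := norm_pos_iff.mp (hd.trans_le ha)
  have hah₀ : a - h ≠ 0 := norm_pos_iff.mp ((half_pos hd).trans_le hah)
  have key : (a - h)⁻¹ - a⁻¹ - h * (a ^ 2)⁻¹ = h ^ 2 * ((a - h)⁻¹ * (a ^ 2)⁻¹) := by
    field_simp
    ring
  rw [key, norm_mul, norm_mul, norm_inv, norm_inv, norm_pow, norm_pow]
  calc ‖h‖ ^ 2 * (‖a - h‖⁻¹ * (‖a‖ ^ 2)⁻¹) ≤ ‖h‖ ^ 2 * ((d / 2)⁻¹ * (d ^ 2)⁻¹) := by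
        gcongr
    _ = 2 / d ^ 3 * ‖h‖ ^ 2 := by field_simp

theorem isUnit_map_of_isUnit_map_mul {M N F : Type*} [CommMonoid M] [Monoid N] [FunLike F M N]
    [MulHomClass F M N] (φ : F) {x y : M} (h : IsUnit (φ (x * y))) : IsUnit (φ y) := by
  rw [map_mul] at h
  exact ((Commute.isUnit_mul_iff (by rw [Commute, SemiconjBy, ← map_mul, ← map_mul, mul_comm]))
    |>.mp h).2

namespace ContinuousMap

variable {T : Type*} [TopologicalSpace T]

section PointwiseDiv

variable {𝕜 : Type*} [GroupWithZero 𝕜] [TopologicalSpace 𝕜]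

/-- The pointwise quotient `f / v`; it is the expected function when `v` has no zero on the
closed support of `f`, and `0` otherwise. -/
def pointwiseDiv (f v : C(T, 𝕜)) : C(T, 𝕜) := mkD (fun x => f x / v x) 0

variable [ContinuousInv₀ 𝕜] [ContinuousMul 𝕜] [T1Space 𝕜]

theorem _root_.Continuous.div_of_forall_mem_tsupport {f v : T → 𝕜} (hf : Continuous f)
    (hv : Continuous v) (h : ∀ x ∈ tsupport f, v x ≠ 0) : Continuous fun x => f x / v x := by
  refine (hf.continuousOn.div hv.continuousOn fun _ hx => hx).continuous_of_tsupport_subset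
    (isOpen_compl_singleton.preimage hv) ?_
  simp only [div_eq_mul_inv]
  exact tsupport_mul_subset_left.trans h

variable {f v : C(T, 𝕜)}

theorem pointwiseDiv_apply (h : ∀ x ∈ tsupport f, v x ≠ 0) (x : T) :
    pointwiseDiv f v x = f x / v x :=
  mkD_apply_of_continuous (f.continuous.div_of_forall_mem_tsupport v.continuous h)

theorem pointwiseDiv_mul_cancel (h : ∀ x ∈ tsupport f, v x ≠ 0) : pointwiseDiv f v * v = f := by
  ext x
  rw [mul_apply, pointwiseDiv_apply h]
  by_cases hx : x ∈ tsupport f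
  · exact div_mul_cancel₀ _ (h x hx)
  · simp [image_eq_zero_of_notMem_tsupport hx]

theorem exists_mul_eq_of_forall_mem_tsupport (h : ∀ x ∈ tsupport f, v x ≠ 0) :
    ∃ w : C(T, 𝕜), w * v = f :=
  ⟨_, pointwiseDiv_mul_cancel h⟩

end PointwiseDiv

theorem hasDerivAt_pointwiseDiv_sub_algebraMap [CompactSpace T] {f v : C(T, ℂ)} {μ₀ : ℂ}
    (hμ₀ : ∀ x ∈ tsupport f, v x ≠ μ₀) :
    HasDerivAt (fun μ => pointwiseDiv f (v - algebraMap ℂ C(T, ℂ) μ))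
      (pointwiseDiv f ((v - algebraMap ℂ C(T, ℂ) μ₀) ^ 2)) μ₀ := by
  obtain ⟨d, hd, hdist⟩ : ∃ d > 0, ∀ x ∈ tsupport f, d ≤ ‖v x - μ₀‖ := by
    have hS : IsClosed (v '' tsupport f) :=
      ((isClosed_tsupport f).isCompact.image v.continuous).isClosed
    obtain ⟨d, hd, hball⟩ := Metric.isOpen_iff.mp hS.isOpen_compl μ₀
      (by rintro ⟨x, hx, rfl⟩; exact hμ₀ x hx rfl)
    refine ⟨d, hd, fun x hx => not_lt.mp fun h => hball ?_ ⟨x, hx, rfl⟩⟩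
    rwa [Metric.mem_ball, dist_eq_norm]
  rw [hasDerivAt_iff_isLittleO]
  refine (Asymptotics.IsBigO.of_bound (‖f‖ * (2 / d ^ 3)) ?_).trans_isLittleO
    (Asymptotics.isLittleO_pow_sub_sub μ₀ one_lt_two)
  filter_upwards [Metric.ball_mem_nhds μ₀ (half_pos hd)] with μ hμ
  rw [Metric.mem_ball, dist_eq_norm] at hμ
  have hne : ∀ ν, ‖ν - μ₀‖ < d → ∀ x ∈ tsupport f, (v - algebraMap ℂ C(T, ℂ) ν) x ≠ 0 := by
    intro ν hν x hx h
    simp only [sub_apply, algebraMap_apply, smul_eq_mul, mul_one, sub_eq_zero] at h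
    exact (hdist x hx).not_gt (h ▸ hν)
  simp only [norm_pow, norm_norm]
  refine (norm_le _ (by positivity)).mpr fun x => ?_
  rw [sub_apply, sub_apply, smul_apply, pointwiseDiv_apply (hne μ (by linarith)),
    pointwiseDiv_apply (hne μ₀ (by simpa using hd)),
    pointwiseDiv_apply fun x hx => pow_ne_zero 2 (hne μ₀ (by simpa using hd) x hx)]
  simp only [sub_apply, pow_apply, algebraMap_apply, smul_eq_mul, mul_one]
  by_cases hx : x ∈ tsupport f
  · have key : f x / (v x - μ) - f x / (v x - μ₀) - (μ - μ₀) * (f x / (v x - μ₀) ^ 2) =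
        f x * (((v x - μ₀) - (μ - μ₀))⁻¹ - (v x - μ₀)⁻¹ - (μ - μ₀) * ((v x - μ₀) ^ 2)⁻¹) := by
      rw [sub_sub_sub_cancel_right]
      ring
    rw [key, norm_mul, mul_assoc]
    exact mul_le_mul (norm_coe_le_norm f x)
      (norm_inv_sub_sub_inv_sub_mul_inv_sq_le hd (hdist x hx) hμ.le) (norm_nonneg _)
      (norm_nonneg f)
  · simp only [image_eq_zero_of_notMem_tsupport hx, zero_div, sub_self, mul_zero, norm_zero]
    positivity

theorem exists_tsupport_subset_disjoint_tsupport_one_sub [CompactSpace T] [T2Space T]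
    {F U : Set T} (hF : IsClosed F) (hU : IsOpen U) (hFU : F ⊆ U) :
    ∃ φ : C(T, ℂ), (∀ x, ‖φ x‖ ≤ 1) ∧ tsupport φ ⊆ U ∧ Disjoint (tsupport ⇑(1 - φ)) F := by
  obtain ⟨V, hV, hFV, hVU⟩ := normal_exists_closure_subset hF hU hFU
  obtain ⟨φ, hφU, hφV, hφ01⟩ := exists_tsupport_one_of_isOpen_isClosed hU
    (isClosed_closure.isCompact) isClosed_closure hVU
  refine ⟨⟨fun x => (φ x : ℂ), by fun_prop⟩, fun x => ?_, ?_,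
    Set.disjoint_right.mpr fun x hx => ?_⟩
  · simpa [abs_of_nonneg (hφ01 x).1] using (hφ01 x).2
  · exact (tsupport_comp_subset ofReal_zero _).trans hφU
  · rw [notMem_tsupport_iff_eventuallyEq]
    filter_upwards [hV.mem_nhds (hFV hx)] with y hy
    simp [hφV (subset_closure hy)]

theorem isUnit_map_of_forall_mem_ne_zero [CompactSpace T] [T2Space T] {A F : Type*} [Ring A]
    [FunLike F C(T, ℂ) A] [RingHomClass F C(T, ℂ) A] (Φ : F) {S : Set T} (hS : IsClosed S)
    (hΦ : ∀ f : C(T, ℂ), Disjoint (tsupport f) S → Φ f = 0) {u : C(T, ℂ)}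
    (hu : ∀ x ∈ S, u x ≠ 0) : IsUnit (Φ u) := by
  obtain ⟨φ, -, hφu, hφS⟩ := exists_tsupport_subset_disjoint_tsupport_one_sub hS
    (isOpen_compl_singleton.preimage u.continuous) hu
  obtain ⟨w, hw⟩ := exists_mul_eq_of_forall_mem_tsupport (f := φ) (v := u) hφu
  have hφ : Φ φ = 1 := by
    have h := hΦ _ hφS
    rw [map_sub, map_one, sub_eq_zero] at h
    exact h.symm
  exact isUnit_map_of_isUnit_map_mul Φ (x := w) (by rw [hw, hφ]; exact isUnit_one)

theorem isUnit_map_of_isUnit_map_of_apply_eq_zero [CompactSpace T] [T2Space T] {A : Type*}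
    [NormedRing A] [NormedAlgebra ℂ A] [CompleteSpace A] (Φ : C(T, ℂ) →A[ℂ] A) {x₀ : T}
    {u v : C(T, ℂ)} (hu₀ : u x₀ = 0) (hv : ∀ x, v x = 0 → x = x₀) (hu : IsUnit (Φ u)) :
    IsUnit (Φ v) := by
  obtain ⟨R, hR⟩ : ∃ R, R * Φ u = 1 := ⟨↑hu.unit⁻¹, hu.val_inv_mul⟩
  set C := ‖R‖ * ‖Φ.toContinuousLinearMap‖
  have hε : 0 < (C + 1)⁻¹ := by positivity
  obtain ⟨φ, hφ1, hφu, hφx₀⟩ := exists_tsupport_subset_disjoint_tsupport_one_sub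
    (F := {x₀}) (U := {x | ‖u x‖ < (C + 1)⁻¹}) isClosed_singleton
    (isOpen_lt (by fun_prop) continuous_const) (by simpa [hu₀] using hε)
  have huφ : ‖u * φ‖ ≤ (C + 1)⁻¹ := (norm_le _ hε.le).mpr fun x => by
    rw [mul_apply, norm_mul]
    by_cases hx : x ∈ tsupport φ
    · exact (mul_le_of_le_one_right (norm_nonneg _) (hφ1 x)).trans (hφu hx).le
    · simp [image_eq_zero_of_notMem_tsupport hx, hε.le]
  have hφ : ‖Φ φ‖ < 1 := calc
    ‖Φ φ‖ = ‖R * Φ (u * φ)‖ := by rw [map_mul, ← mul_assoc, hR, one_mul]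
    _ ≤ ‖R‖ * (‖Φ.toContinuousLinearMap‖ * ‖u * φ‖) :=
      (norm_mul_le _ _).trans (by gcongr; exact Φ.toContinuousLinearMap.le_opNorm _)
    _ ≤ C * (C + 1)⁻¹ := by rw [← mul_assoc]; gcongr
    _ < 1 := by rw [mul_inv_lt_iff₀ (by positivity)]; linarith
  obtain ⟨w, hw⟩ := exists_mul_eq_of_forall_mem_tsupport (f := 1 - φ) (v := v)
    fun x hx hvx => Set.disjoint_singleton_right.mp hφx₀ (hv x hvx ▸ hx)
  exact isUnit_map_of_isUnit_map_mul Φ (x := w)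
    (by simpa [hw] using (Units.oneSub _ hφ).isUnit)

theorem map_pointwiseDiv_sub_algebraMap {A F : Type*} [Ring A] [Algebra ℂ A]
    [FunLike F C(T, ℂ) A] [AlgHomClass F ℂ C(T, ℂ) A] (Φ : F) {f v : C(T, ℂ)} {μ : ℂ}
    (hμ : ∀ x ∈ tsupport f, v x ≠ μ) (hμa : μ ∈ resolventSet ℂ (Φ v)) :
    Φ (pointwiseDiv f (v - algebraMap ℂ C(T, ℂ) μ)) = -(Φ f * resolvent (Φ v) μ) := by
  set q := pointwiseDiv f (v - algebraMap ℂ C(T, ℂ) μ)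
  have hdiv : q * (v - algebraMap ℂ C(T, ℂ) μ) = f := pointwiseDiv_mul_cancel fun x hx h =>
    hμ x hx (by simpa [sub_eq_zero] using h)
  have h : Φ q * (algebraMap ℂ A μ - Φ v) = -Φ f := by
    rw [← hdiv, ← AlgHomClass.commutes Φ, ← map_sub, ← neg_sub, map_neg, mul_neg, map_mul]
  calc Φ q = Φ q * (algebraMap ℂ A μ - Φ v) * Ring.inverse (algebraMap ℂ A μ - Φ v) :=
        (Ring.mul_inverse_cancel_right _ _ hμa).symm
    _ = -(Φ f * resolvent (Φ v) μ) := by rw [h, neg_mul, resolvent]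

section Liouville

variable {A : Type*} [NormedRing A] [NormedAlgebra ℂ A] [CompleteSpace A] [CompactSpace T]

theorem map_eq_zero_of_disjoint_tsupport (Φ : C(T, ℂ) →A[ℂ] A) (v : C(T, ℂ)) {f : C(T, ℂ)}
    (hf : Disjoint (tsupport f) (v ⁻¹' spectrum ℂ (Φ v))) : Φ f = 0 := by
  set S := v '' tsupport f
  have hS : IsClosed S := ((isClosed_tsupport f).isCompact.image v.continuous).isClosed
  have hSσ : ∀ μ ∈ S, μ ∈ resolventSet ℂ (Φ v) := by
    rintro _ ⟨x, hx, rfl⟩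
    exact spectrum.mem_resolventSet_iff.mpr
      (spectrum.notMem_iff.mp (Set.disjoint_left.mp hf hx))
  have hnS : ∀ μ ∉ S, ∀ x ∈ tsupport f, v x ≠ μ := fun μ hμ x hx h => hμ ⟨x, hx, h⟩
  set F : ℂ → A := fun μ =>
    if μ ∈ S then -(Φ f * resolvent (Φ v) μ) else Φ (pointwiseDiv f (v - algebraMap ℂ _ μ))
  have hF : ∀ μ ∈ resolventSet ℂ (Φ v), F μ = -(Φ f * resolvent (Φ v) μ) := by
    intro μ hμ
    by_cases hμS : μ ∈ S
    · simp only [F, if_pos hμS]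
    · simp only [F, if_neg hμS, map_pointwiseDiv_sub_algebraMap Φ (hnS μ hμS) hμ]
  have hFdiff : Differentiable ℂ F := by
    intro μ
    by_cases hμ : μ ∈ resolventSet ℂ (Φ v)
    · refine (((spectrum.hasDerivAt_resolvent_const_left hμ).differentiableAt.const_mul
        (Φ f)).neg).congr_of_eventuallyEq ?_
      filter_upwards [(spectrum.isOpen_resolventSet (Φ v)).mem_nhds hμ] with ν hν using hF ν hν
    · have hμS : μ ∉ S := fun h => hμ (hSσ μ h)
      have hq := hasDerivAt_pointwiseDiv_sub_algebraMap (hnS μ hμS)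
      refine (Φ.toContinuousLinearMap.hasFDerivAt.comp_hasDerivAt μ
        hq).differentiableAt.congr_of_eventuallyEq ?_
      filter_upwards [hS.isOpen_compl.mem_nhds hμS] with ν hν
      simp only [F, if_neg hν]
      rfl
  have hresolvent : ∀ᶠ μ in Bornology.cobounded ℂ, μ ∈ resolventSet ℂ (Φ v) := by
    have := Bornology.isBounded_def.mp (spectrum.isCompact (𝕜 := ℂ) (Φ v)).isBounded
    rwa [spectrum, compl_compl] at this
  have hFlim : Tendsto F (cocompact ℂ) (𝓝 0) := by
    rw [← Metric.cobounded_eq_cocompact]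
    refine Tendsto.congr' (by filter_upwards [hresolvent] with ν hν using (hF ν hν).symm) ?_
    simpa using ((spectrum.resolvent_tendsto_cobounded (Φ v)).const_mul (Φ f)).neg
  obtain ⟨μ, hμ⟩ := hresolvent.exists
  have := hFdiff.apply_eq_of_tendsto_cocompact μ hFlim
  rw [hF μ hμ, neg_eq_zero] at this
  exact (spectrum.isUnit_resolvent.mp hμ).mul_left_eq_zero.mp this

end Liouville

theorem spectrum_map_eq_image [CompactSpace T] [T2Space T] {A : Type*} [NormedRing A]
    [NormedAlgebra ℂ A] [CompleteSpace A] (Φ : C(T, ℂ) →A[ℂ] A) {v : C(T, ℂ)}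
    (hv : Function.Injective v) (g : C(T, ℂ)) :
    spectrum ℂ (Φ g) = g '' (v ⁻¹' spectrum ℂ (Φ v)) := by
  ext w
  rw [spectrum.mem_iff, ← AlgHomClass.commutes Φ, ← map_sub]
  constructor
  · intro hw
    by_contra! hne
    refine hw (isUnit_map_of_forall_mem_ne_zero Φ
      ((spectrum.isClosed (𝕜 := ℂ) (Φ v)).preimage v.continuous)
      (fun f hf => map_eq_zero_of_disjoint_tsupport Φ v hf) fun x hx h => hne ⟨x, hx, ?_⟩)
    rw [sub_apply, algebraMap_apply, smul_eq_mul, mul_one, sub_eq_zero] at h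
    exact h.symm
  · rintro ⟨x₀, hx₀, rfl⟩ hunit
    refine spectrum.mem_iff.mp hx₀ ?_
    rw [← AlgHomClass.commutes Φ, ← map_sub]
    exact isUnit_map_of_isUnit_map_of_apply_eq_zero Φ (x₀ := x₀)
      (u := algebraMap ℂ C(T, ℂ) (g x₀) - g) (v := algebraMap ℂ C(T, ℂ) (v x₀) - v)
      (by simp)
      (fun x hx => (hv (show v x₀ = v x by simpa [sub_eq_zero] using hx)).symm) hunit

end ContinuousMap

theorem IsCKCalculus.exists_continuousAlgHom {K : Set ℂ} [CompactSpace K] {Z : X →L[ℂ] X}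
    {Ψ : C(K, ℂ) → X →L[ℂ] X} (hΨ : IsCKCalculus K Z Ψ) :
    ∃ Φ : C(K, ℂ) →A[ℂ] (X →L[ℂ] X),
      ⇑Φ = Ψ ∧ Φ ⟨fun z => (z : ℂ), continuous_subtype_val⟩ = Z := by
  obtain ⟨hadd, hsmul, hmul, hone, ⟨C, hC⟩, hι⟩ := hΨ
  let L : C(K, ℂ) →ₗ[ℂ] (X →L[ℂ] X) := ⟨⟨Ψ, hadd⟩, hsmul⟩
  refine ⟨{ AlgHom.ofLinearMap L hone hmul with cont := ?_ }, rfl, hι⟩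
  exact AddMonoidHomClass.continuous_of_bound L C fun g => by
    rw [ContinuousMap.norm_eq_iSup_norm]
    exact hC g

theorem ck_calculus_spectral_mapping_general [CompleteSpace X]
    (Z : X →L[ℂ] X)
    (K : Set ℂ) (hK : IsCompact K)
    (Ψ : C(↥K, ℂ) → X →L[ℂ] X) (hΨ : IsCKCalculus K Z Ψ)
    (g : C(↥K, ℂ)) :
    spectrum ℂ (Ψ g) = {w : ℂ | ∃ z : ↥K, (z : ℂ) ∈ spectrum ℂ Z ∧ g z = w} := by
  have : CompactSpace K := isCompact_iff_compactSpace.mp hK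
  obtain ⟨Φ, rfl, rfl⟩ := hΨ.exists_continuousAlgHom
  exact ContinuousMap.spectrum_map_eq_image Φ
    (v := ⟨fun z => (z : ℂ), continuous_subtype_val⟩) Subtype.val_injective g

/-- **Spectral mapping theorem for a bounded `C(K)`-calculus** (Lemma 3.1(c)). -/
theorem ck_calculus_spectral_mapping [CompleteSpace X]
    (Z : X →L[ℂ] X)
    (K : Set ℂ) (hK : IsCompact K) (hKi : K ⊆ {z : ℂ | z.re = 0})
    (hspec : spectrum ℂ Z ⊆ K)
    (Ψ : C(↥K, ℂ) → X →L[ℂ] X) (hΨ : IsCKCalculus K Z Ψ)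
    (g : C(↥K, ℂ)) :
    spectrum ℂ (Ψ g) = {w : ℂ | ∃ z : ↥K, (z : ℂ) ∈ spectrum ℂ Z ∧ g z = w} :=
  ck_calculus_spectral_mapping_general Z K hK Ψ hΨ g
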